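/- Let a, d be split quaternions with a * a^+ * d = d (so that a x = d is solvable). Then the full solution set of a x = d is { a^+ d + (1 - a^+ a) y : y ∈ H_s }. -/

import Mathlib

/-! Any inner inverse `p` of `a` (`a p a = a`) parametrises the solutions of `a x = d`:
`a (p d + (1 - p a) y) = a p d = d`, and a solution `x` is the case `y = x`, because
`p d = p a x`. So it suffices that `a a⁺ a = a`. When `I_a ≠ 0` this is `a · conj a = I_a`. When
`I_a = 0` and `a ≠ 0`, the element `b = conj z1 + z2 j` satisfies `a b a = 4 |z1|² a`, and
`|z1| ≠ 0` since `I_a = |z1|² - |z2|²` forces `|z1| = |z2|`. -/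

open Quaternion

/-- The split quaternion algebra: `i^2 = -1`, `j^2 = 1`. -/
abbrev Hs : Type := ℍ[ℝ, -1, 1]

/-- The real scalar `I_x = x0^2 + x1^2 - x2^2 - x3^2` of a split quaternion. -/
def Ix (x : Hs) : ℝ := x.re ^ 2 + x.imI ^ 2 - x.imJ ^ 2 - x.imK ^ 2

open Classical in
/-- The Moore–Penrose inverse of a split quaternion: `0` if `a = 0`,
`conj a / I_a` if `I_a ≠ 0`, and `(conj z1 + z2 j)/(4 |z1|^2)` if `I_a = 0`
and `a ≠ 0`, where `a = z1 + z2 j`. -/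
noncomputable def pinv (a : Hs) : Hs :=
  if a = 0 then 0
  else if Ix a ≠ 0 then (Ix a)⁻¹ • star a
  else (4 * (a.re ^ 2 + a.imI ^ 2))⁻¹ • (⟨a.re, -a.imI, a.imJ, a.imK⟩ : Hs)

theorem setOf_mul_eq_eq_of_mul_mul_self {R : Type*} [Ring R] {a p : R} (hp : a * p * a = a)
    {d : R} (hd : a * p * d = d) :
    {x : R | a * x = d} = {x : R | ∃ y : R, x = p * d + (1 - p * a) * y} := by
  ext x
  simp only [Set.mem_ofPred_eq]
  constructor
  · rintro rfl
    exact ⟨x, by noncomm_ring⟩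
  · rintro ⟨y, rfl⟩
    calc a * (p * d + (1 - p * a) * y) = a * p * d + (a - a * p * a) * y := by noncomm_ring
      _ = d := by rw [hp, hd, sub_self, zero_mul, add_zero]

theorem mul_star_eq_Ix (a : Hs) : a * star a = ((Ix a : ℝ) : Hs) := by
  rw [QuaternionAlgebra.mul_star_eq_coe]
  congr 1
  simp only [Ix, QuaternionAlgebra.re_mul, QuaternionAlgebra.re_star, QuaternionAlgebra.imI_star,
    QuaternionAlgebra.imJ_star, QuaternionAlgebra.imK_star]
  ring

theorem re_sq_add_imI_sq_ne_zero {a : Hs} (ha : a ≠ 0) (hI : Ix a = 0) :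
    a.re ^ 2 + a.imI ^ 2 ≠ 0 := by
  intro hz
  unfold Ix at hI
  have hre : a.re = 0 := by nlinarith [sq_nonneg a.re, sq_nonneg a.imI]
  have himI : a.imI = 0 := by nlinarith [sq_nonneg a.re, sq_nonneg a.imI]
  have himJ : a.imJ = 0 := by nlinarith [sq_nonneg a.imJ, sq_nonneg a.imK]
  have himK : a.imK = 0 := by nlinarith [sq_nonneg a.imJ, sq_nonneg a.imK]
  exact ha (by ext <;> simp [hre, himI, himJ, himK])

theorem mul_mul_self_of_Ix_eq_zero {a : Hs} (hI : Ix a = 0) :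
    a * (⟨a.re, -a.imI, a.imJ, a.imK⟩ : Hs) * a = (4 * (a.re ^ 2 + a.imI ^ 2)) • a := by
  unfold Ix at hI
  ext <;> simp only [QuaternionAlgebra.re_mul, QuaternionAlgebra.imI_mul, QuaternionAlgebra.imJ_mul,
      QuaternionAlgebra.imK_mul, QuaternionAlgebra.re_smul, QuaternionAlgebra.imI_smul,
      QuaternionAlgebra.imJ_smul, QuaternionAlgebra.imK_smul, smul_eq_mul] <;>
    [ linear_combination (-3 * a.re) * hI;
      linear_combination (-3 * a.imI) * hI;
      linear_combination (-a.imJ) * hI;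
      linear_combination (-a.imK) * hI ]

theorem mul_pinv_mul_self (a : Hs) : a * pinv a * a = a := by
  unfold pinv
  by_cases ha : a = 0
  · simp [ha]
  rw [if_neg ha]
  by_cases hI : Ix a = 0
  · rw [if_neg (not_not.mpr hI), mul_smul_comm, smul_mul_assoc, mul_mul_self_of_Ix_eq_zero hI,
      smul_smul, inv_mul_cancel₀ (mul_ne_zero four_ne_zero (re_sq_add_imI_sq_ne_zero ha hI)),
      one_smul]
  · rw [if_pos hI, mul_smul_comm, mul_star_eq_Ix, smul_mul_assoc,
      QuaternionAlgebra.coe_mul_eq_smul, smul_smul, inv_mul_cancel₀ hI, one_smul]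

/-- If `a * a⁺ * d = d`, then the solution set of `a x = d` is exactly
`{ a⁺ d + (1 - a⁺ a) y : y ∈ H_s }`. -/
theorem linear_solution_set (a d : Hs) (h : a * pinv a * d = d) :
    {x : Hs | a * x = d} = {x : Hs | ∃ y : Hs, x = pinv a * d + (1 - pinv a * a) * y} :=
  setOf_mul_eq_eq_of_mul_mul_self (mul_pinv_mul_self a) h
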